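/- arXiv:2509.00829 — 2 statements merged into one kernel-verified Lean document; each statement's English description precedes it below -/
import Mathlib

section
/- Let L₁ and L₂ be real numbers with 0 < L₁ < L₂, and let β be the unique positive real number satisfying exp(-β·L₁) + exp(-β·L₂) = 1. Then either there exists a natural number r > 1 such that 1/(r+1) < exp(-β·L₂) < 1/r, or there exist natural numbers m > 1 and s > 1 such that 1/(s+1) < exp(-m·β·L₁) < 1/s. -/
lemma two_thirds_pow_ne_half (n : ℕ) : ((2:ℝ)/3)^n ≠ 1/2 := by
  intro h
  have h1 : (2:ℝ)^n / 3^n = 1/2 := by rw [← div_pow]; exact h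
  have h2 : (2:ℝ)^n * 2 = 3^n := by
    have h3 : ((3:ℝ)^n) ≠ 0 := by positivity
    field_simp at h1
    linarith
  have h4 : (2:ℝ)^(n+1) = 3^n := by rw [pow_succ]; exact h2
  have h5 : (2:ℕ)^(n+1) = 3^n := by exact_mod_cast h4
  have h6 : 2^(n+1) % 2 = 0 := by simp [Nat.pow_succ, Nat.mul_mod]
  have h7 : 3^n % 2 = 1 := by simp [Nat.pow_mod]
  omega

/-- Dichotomy for the trace values: either `exp (-β L₂)` lies strictly between `1/(r+1)`
and `1/r` for some natural `r > 1`, or `exp (-m β L₁)` lies strictly between `1/(s+1)`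
and `1/s` for some naturals `m, s > 1`. -/
theorem stmt2 (L₁ L₂ β : ℝ) (h₁ : 0 < L₁) (h₁₂ : L₁ < L₂) (hβ : 0 < β)
    (hKMS : Real.exp (-β * L₁) + Real.exp (-β * L₂) = 1) :
    (∃ r : ℕ, 1 < r ∧ 1 / (r + 1 : ℝ) < Real.exp (-β * L₂) ∧
      Real.exp (-β * L₂) < 1 / (r : ℝ)) ∨
    (∃ m s : ℕ, 1 < m ∧ 1 < s ∧ 1 / (s + 1 : ℝ) < Real.exp (-(m : ℝ) * β * L₁) ∧
      Real.exp (-(m : ℝ) * β * L₁) < 1 / (s : ℝ)) := by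
  set x := Real.exp (-β * L₁) with hxdef
  set y := Real.exp (-β * L₂) with hydef
  have hy0 : 0 < y := Real.exp_pos _
  have hx0 : 0 < x := Real.exp_pos _
  have hyx : y < x := by
    apply Real.exp_lt_exp.mpr
    nlinarith
  have hyhalf : y < 1/2 := by linarith
  have hx1 : x < 1 := by linarith
  have hxhalf : 1/2 < x := by linarith
  set r := ⌊1/y⌋₊ with hrdef
  have h2r : 2 ≤ r := by
    apply Nat.le_floor
    rw [le_div_iff₀ hy0]
    push_cast
    linarith
  have hr0 : (0:ℝ) < (r:ℝ) := by
    have : (2:ℝ) ≤ (r:ℝ) := by exact_mod_cast h2r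
    linarith
  have hylow : 1/((r:ℝ)+1) < y := by
    have h1 : 1/y < (r:ℝ) + 1 := Nat.lt_floor_add_one (1/y)
    rw [div_lt_iff₀ hy0] at h1
    rw [div_lt_iff₀ (by linarith : (0:ℝ) < (r:ℝ)+1)]
    linarith
  have hyle : y ≤ 1/(r:ℝ) := by
    have h1 : (r:ℝ) ≤ 1/y := Nat.floor_le (by positivity)
    rw [le_div_iff₀ hy0] at h1
    rw [le_div_iff₀ hr0]
    linarith
  rcases lt_or_eq_of_le hyle with hlt | heq
  · left
    exact ⟨r, by omega, hylow, hlt⟩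
  · -- y = 1/r, r ≥ 3
    have hr3R : (2:ℝ) < (r:ℝ) := by
      rw [heq] at hyhalf
      rw [div_lt_div_iff₀ hr0 (by norm_num)] at hyhalf
      linarith
    have hr3 : 3 ≤ r := by
      have : (2:ℕ) < r := by exact_mod_cast hr3R
      omega
    have hxval : x = 1 - 1/(r:ℝ) := by rw [← heq]; linarith
    have hx23 : 2/3 ≤ x := by
      rw [hxval]
      have h3r : (3:ℝ) ≤ (r:ℝ) := by exact_mod_cast hr3
      have : 1/(r:ℝ) ≤ 1/3 := by
        apply one_div_le_one_div_of_le (by norm_num) h3r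
      linarith
    have hex : ∃ n : ℕ, x^n < 1/2 := exists_pow_lt_of_lt_one (by norm_num) hx1
    set m := Nat.find hex with hmdef
    have hm : x^m < 1/2 := Nat.find_spec hex
    have hm2 : 2 ≤ m := by
      by_contra hc
      push_neg at hc
      interval_cases m
      · norm_num at hm
      · rw [pow_one] at hm; linarith
    have hmin : ¬ x^(m-1) < 1/2 := Nat.find_min hex (by omega)
    push_neg at hmin
    have hxm1 : x^m = x * x^(m-1) := by
      conv_lhs => rw [show m = (m-1) + 1 by omega]
      rw [pow_succ]
      ring
    have hkey : 1/3 < x^m := by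
      rcases eq_or_lt_of_le hx23 with hxe | hxl
      · have hne : x^(m-1) ≠ 1/2 := by
          rw [← hxe]; exact two_thirds_pow_ne_half _
        have hgt : 1/2 < x^(m-1) := lt_of_le_of_ne hmin (Ne.symm hne)
        rw [hxm1]
        nlinarith [mul_lt_mul_of_pos_left hgt (by linarith : (0:ℝ) < x), hxe]
      · rw [hxm1]
        nlinarith [hmin, hxl]
    right
    refine ⟨m, 2, by omega, by norm_num, ?_, ?_⟩
    all_goals {
      have hexp : Real.exp (-(m:ℝ)*β*L₁) = x^m := by
        have heq2 : (-(m:ℝ))*β*L₁ = (m:ℝ) * (-β*L₁) := by ring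
        rw [heq2, Real.exp_nat_mul]
      rw [hexp]
      push_cast
      norm_num
      linarith
    }
end

section
/- Let A be a unital C*-algebra, λ : A → A a unital *-homomorphism, u and w unitary elements of A, k ∈ ℕ, and ε ≥ 0. Set u_k = u · λ(u) · λ²(u) ⋯ λ^{k-1}(u) and v = u_k · w. If ‖λ^k(u) − w · λ(w*)‖ ≤ ε, then ‖u − v · λ(v*)‖ ≤ ε. -/
section Aux
variable {A : Type*} [NormedRing A] [StarRing A] [CStarRing A]
    [NormedAlgebra ℂ A] [CompleteSpace A] [StarModule ℂ A]

lemma stmt8_aux_mem (l : A →⋆ₐ[ℂ] A) (u : A) (hu : u ∈ unitary A) :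
    ∀ i, (⇑l)^[i] u ∈ unitary A := by
  intro i
  induction i with
  | zero => simpa using hu
  | succ n ih =>
    rw [Function.iterate_succ_apply']
    constructor <;> simp [Unitary.mem_iff.mp ih |>.1, Unitary.mem_iff.mp ih |>.2,
      ← map_star, ← map_mul]

lemma stmt8_aux_prod_mem (l : A →⋆ₐ[ℂ] A) (u : A) (hu : u ∈ unitary A) (k : ℕ) :
    ((List.range k).map (fun i => (⇑l)^[i] u)).prod ∈ unitary A := by
  induction k with
  | zero => simp [Unitary.mem_iff]
  | succ n ih =>
    rw [List.range_succ, List.map_append, List.prod_append]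
    simpa using mul_mem ih (stmt8_aux_mem l u hu n)

lemma stmt8_aux_key (l : A →⋆ₐ[ℂ] A) (u : A) (k : ℕ) :
    u * l ((List.range k).map (fun i => (⇑l)^[i] u)).prod
      = ((List.range k).map (fun i => (⇑l)^[i] u)).prod * (⇑l)^[k] u := by
  induction k with
  | zero => simp
  | succ n ih =>
    rw [List.range_succ, List.map_append, List.prod_append]
    simp only [List.map_cons, List.map_nil, List.prod_cons, List.prod_nil, mul_one, map_mul]
    rw [← mul_assoc, ih, mul_assoc, mul_assoc, ← Function.iterate_succ_apply' l]

end Aux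

/-- Transfer step: if `‖λ^k(u) − w·λ(w*)‖ ≤ ε`, then with `u_k = u·λ(u)⋯λ^{k-1}(u)` and
`v = u_k·w`, one has `‖u − v·λ(v*)‖ ≤ ε`. -/
theorem stmt8 {A : Type*} [NormedRing A] [StarRing A] [CStarRing A]
    [NormedAlgebra ℂ A] [CompleteSpace A] [StarModule ℂ A]
    (l : A →⋆ₐ[ℂ] A) (u w : A) (hu : u ∈ unitary A) (hw : w ∈ unitary A)
    (k : ℕ) (ε : ℝ) (hε : 0 ≤ ε)
    (h : ‖(⇑l)^[k] u - w * l (star w)‖ ≤ ε) :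
    ‖u - (((List.range k).map (fun i => (⇑l)^[i] u)).prod * w)
        * l (star (((List.range k).map (fun i => (⇑l)^[i] u)).prod * w))‖ ≤ ε := by
  set P : A := ((List.range k).map (fun i => (⇑l)^[i] u)).prod with hP
  have hPu : P ∈ unitary A := stmt8_aux_prod_mem l u hu k
  have hlu : ∀ x : A, x ∈ unitary A → l x ∈ unitary A := fun x hx => by
    constructor <;> simp [Unitary.mem_iff.mp hx |>.1, Unitary.mem_iff.mp hx |>.2,
      ← map_star, ← map_mul]
  have key : u * l P = P * (⇑l)^[k] u := stmt8_aux_key l u k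
  have hu_eq : u = P * (⇑l)^[k] u * l (star P) := by
    have h1 : l P * l (star P) = 1 := by
      rw [← map_mul, (Unitary.mem_iff.mp hPu).2, map_one]
    calc u = u * (l P * l (star P)) := by rw [h1, mul_one]
    _ = (u * l P) * l (star P) := by rw [mul_assoc]
    _ = P * (⇑l)^[k] u * l (star P) := by rw [key]
  have hdiff : u - (P * w) * l (star (P * w))
      = P * (((⇑l)^[k] u - w * l (star w)) * l (star P)) := by
    conv_lhs => rw [hu_eq]
    rw [star_mul, map_mul]
    noncomm_ring
  rw [hdiff, CStarRing.norm_mem_unitary_mul _ hPu,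
    CStarRing.norm_mul_mem_unitary _ (hlu _ (Unitary.star_mem hPu))]
  exact h
end
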